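/- arXiv:2501.13079 — 7 statements merged into one kernel-verified Lean document; each statement's English description precedes it below -/
import Mathlib

section
/- Let Ψ : ℝ → ℝ be defined by Ψ(r) = r²/(2(r + e^{-r} - 1)) for r ≠ 0 and Ψ(0) = 1. Then Ψ is strictly monotone increasing on ℝ. -/
/-!
Integrating by parts twice gives `2 (r + e^{-r} - 1) / r² = ∫₀¹ 2 (1 - t) e^{-rt} dt` for `r ≠ 0`,
and at `r = 0` the integral equals `1`; hence `1 / Ψ` is this integral for every `r`. For
`t ∈ (0, 1)` the integrand is positive and strictly decreasing in `r`, so `1 / Ψ` is positive and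
strictly decreasing, and `Ψ` is strictly increasing.
-/

noncomputable def Psi (r : ℝ) : ℝ :=
  if r = 0 then 1 else r ^ 2 / (2 * (r + Real.exp (-r) - 1))

open Real

noncomputable def psiInv (r : ℝ) : ℝ := ∫ t in (0 : ℝ)..1, 2 * (1 - t) * exp (-(r * t))

lemma psiInv_pos (r : ℝ) : 0 < psiInv r := by
  refine intervalIntegral.intervalIntegral_pos_of_pos_on
    (Continuous.intervalIntegrable (by fun_prop) 0 1) (fun t ht => ?_) zero_lt_one
  have : 0 < 1 - t := by linarith [ht.2]
  positivity

lemma psiInv_zero : psiInv 0 = 1 := by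
  simp only [psiInv, zero_mul, neg_zero, exp_zero, mul_one]
  rw [intervalIntegral.integral_const_mul, intervalIntegral.integral_comp_sub_left (fun t => t)]
  norm_num

lemma hasDerivAt_psiInv_antideriv {r : ℝ} (hr : r ≠ 0) (t : ℝ) :
    HasDerivAt (fun t => exp (-(r * t)) * (2 * r * t + 2 - 2 * r) / r ^ 2)
      (2 * (1 - t) * exp (-(r * t))) t := by
  have hexp : HasDerivAt (fun t => exp (-(r * t))) (exp (-(r * t)) * -r) t :=
    ((hasDerivAt_id t).const_mul r).neg.exp.congr_deriv (by simp)
  have hlin : HasDerivAt (fun t => 2 * r * t + 2 - 2 * r) (2 * r) t :=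
    (((hasDerivAt_id t).const_mul (2 * r)).add_const 2).sub_const (2 * r) |>.congr_deriv (by simp)
  refine ((hexp.mul hlin).div_const (r ^ 2)).congr_deriv ?_
  field_simp
  ring

lemma psiInv_of_ne_zero {r : ℝ} (hr : r ≠ 0) :
    psiInv r = 2 * (r + exp (-r) - 1) / r ^ 2 := by
  rw [psiInv, intervalIntegral.integral_eq_sub_of_hasDerivAt
    (fun t _ => hasDerivAt_psiInv_antideriv hr t) (Continuous.intervalIntegrable (by fun_prop) 0 1)]
  field_simp
  simp only [mul_zero, neg_zero, exp_zero]
  ring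

lemma psiInv_strictAnti : StrictAnti psiInv := by
  intro a b hab
  have hexp {t : ℝ} (ht : 0 < t) : exp (-(b * t)) < exp (-(a * t)) :=
    exp_lt_exp.2 (by nlinarith)
  refine intervalIntegral.integral_lt_integral_of_continuousOn_of_le_of_exists_lt zero_lt_one
    (by fun_prop) (by fun_prop) (fun t ht => ?_) ⟨1 / 2, by norm_num, ?_⟩
  · have : 0 ≤ 2 * (1 - t) := by linarith [ht.2]
    exact mul_le_mul_of_nonneg_left (hexp ht.1).le this
  · exact mul_lt_mul_of_pos_left (hexp (by norm_num)) (by norm_num)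

lemma Psi_eq_inv_psiInv (r : ℝ) : Psi r = (psiInv r)⁻¹ := by
  rcases eq_or_ne r 0 with rfl | hr
  · simp [Psi, psiInv_zero]
  · rw [Psi, if_neg hr, psiInv_of_ne_zero hr, inv_div]

/-- `Ψ` is strictly monotone increasing on `ℝ`. -/
theorem Psi_strictMono : StrictMono Psi := by
  intro a b hab
  rw [Psi_eq_inv_psiInv, Psi_eq_inv_psiInv]
  exact inv_strictAnti₀ (psiInv_pos b) (psiInv_strictAnti hab)
end

section
/- Let Ψ : ℝ → ℝ be defined by Ψ(r) = r²/(2(r + e^{-r} - 1)) for r ≠ 0 and Ψ(0) = 1. Then Ψ(r) ≤ 1 + r for all r ≥ 0. -/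
/-!
Clearing the (positive) denominator, `Ψ(r) ≤ 1 + r` becomes `2 ≤ r² + 2(1 + r)e^{-r}`.
The right-hand side has derivative `2r(1 - e^{-r})`, which is nonnegative because `r` and
`1 - e^{-r}` have the same sign, so it is monotone and takes the value `2` at `r = 0`.
-/

open Real

lemma hasDerivAt_sq_add_two_mul_one_add_mul_exp_neg (x : ℝ) :
    HasDerivAt (fun x => x ^ 2 + 2 * (1 + x) * exp (-x)) (2 * x * (1 - exp (-x))) x := by
  have hexp : HasDerivAt (fun x => exp (-x)) (-exp (-x)) x := by
    simpa using (hasDerivAt_neg x).exp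
  have hlin : HasDerivAt (fun x => 2 * (1 + x)) 2 x := by
    simpa using ((hasDerivAt_id x).const_add 1).const_mul 2
  exact ((hasDerivAt_pow 2 x).add (hlin.mul hexp)).congr_deriv (by push_cast; ring)

lemma mul_one_sub_exp_neg_nonneg (x : ℝ) : 0 ≤ x * (1 - exp (-x)) := by
  rcases le_total 0 x with hx | hx
  · exact mul_nonneg hx (sub_nonneg.mpr (exp_le_one_iff.mpr (neg_nonpos.mpr hx)))
  · exact mul_nonneg_of_nonpos_of_nonpos hx (sub_nonpos.mpr (one_le_exp (neg_nonneg.mpr hx)))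

lemma monotone_sq_add_two_mul_one_add_mul_exp_neg :
    Monotone (fun x : ℝ => x ^ 2 + 2 * (1 + x) * exp (-x)) := by
  refine monotone_of_deriv_nonneg
    (fun x => (hasDerivAt_sq_add_two_mul_one_add_mul_exp_neg x).differentiableAt) fun x => ?_
  rw [(hasDerivAt_sq_add_two_mul_one_add_mul_exp_neg x).deriv, mul_assoc]
  exact mul_nonneg zero_le_two (mul_one_sub_exp_neg_nonneg x)

lemma two_le_sq_add_two_mul_one_add_mul_exp_neg {x : ℝ} (hx : 0 ≤ x) :
    2 ≤ x ^ 2 + 2 * (1 + x) * exp (-x) := by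
  simpa using monotone_sq_add_two_mul_one_add_mul_exp_neg hx

lemma add_exp_neg_sub_one_pos {x : ℝ} (hx : x ≠ 0) : 0 < x + exp (-x) - 1 := by
  linarith [add_one_lt_exp (neg_ne_zero.mpr hx)]

/-- `Ψ(r) ≤ 1 + r` for all `r ≥ 0`. -/
theorem Psi_le_one_add (r : ℝ) (hr : 0 ≤ r) : Psi r ≤ 1 + r := by
  rcases hr.eq_or_lt with rfl | hpos
  · simp [Psi]
  have hne : r ≠ 0 := hpos.ne'
  have hden : 0 < 2 * (r + exp (-r) - 1) := mul_pos two_pos (add_exp_neg_sub_one_pos hne)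
  rw [Psi, if_neg hne, div_le_iff₀ hden]
  linarith [two_le_sq_add_two_mul_one_add_mul_exp_neg hr]
end

section
/- Let Ψ : ℝ → ℝ be defined by Ψ(r) = r²/(2(r + e^{-r} - 1)) for r ≠ 0 and Ψ(0) = 1. Then for every r ≥ 0 and every ℓ ∈ ℝ with |ℓ| ≤ r, one has Ψ(-r)·(e^{-ℓ} - 1 + ℓ) ≤ ℓ²/2 ≤ Ψ(r)·(e^{-ℓ} - 1 + ℓ). -/
/-!
Taylor's formula with integral remainder gives `e^{-x} - 1 + x = x² K(x)` with
`K(x) = ∫₀¹ (1 - u) e^{-xu} du`. The kernel `K` is positive and antitone, and `Ψ = 1 / (2K)`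
(also at `0`, where `K(0) = 1/2`), so for `|ℓ| ≤ r` both inequalities reduce to
`K(r) ≤ K(ℓ) ≤ K(-r)`.
-/

open Real

noncomputable def expTaylorKernel (x : ℝ) : ℝ :=
  ∫ u in (0 : ℝ)..1, (1 - u) * exp (-(x * u))

lemma sq_mul_expTaylorKernel (x : ℝ) : x ^ 2 * expTaylorKernel x = exp (-x) - 1 + x := by
  have hderiv : ∀ u ∈ Set.uIcc (0 : ℝ) 1,
      HasDerivAt (fun u => (x * u + (1 - x)) * exp (-(x * u)))
        (x ^ 2 * ((1 - u) * exp (-(x * u)))) u := by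
    intro u _
    have hlin : HasDerivAt (fun u : ℝ => x * u + (1 - x)) x u := by
      simpa using ((hasDerivAt_id u).const_mul x).add_const (1 - x)
    have hexp : HasDerivAt (fun u : ℝ => exp (-(x * u))) (exp (-(x * u)) * -x) u := by
      simpa using ((hasDerivAt_id u).const_mul x).neg.exp
    exact (hlin.mul hexp).congr_deriv (by ring)
  rw [expTaylorKernel, ← intervalIntegral.integral_const_mul,
    intervalIntegral.integral_eq_sub_of_hasDerivAt hderiv
      ((by fun_prop : Continuous _).intervalIntegrable 0 1)]
  simp only [mul_one, add_sub_cancel, one_mul, mul_zero, zero_add, neg_zero, exp_zero]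
  ring

lemma expTaylorKernel_zero : expTaylorKernel 0 = 1 / 2 := by
  simp only [expTaylorKernel, zero_mul, neg_zero, exp_zero, mul_one]
  rw [intervalIntegral.integral_sub intervalIntegrable_const intervalIntegral.intervalIntegrable_id,
    integral_id]
  norm_num

lemma expTaylorKernel_pos (x : ℝ) : 0 < expTaylorKernel x :=
  intervalIntegral.intervalIntegral_pos_of_pos_on
    ((by fun_prop : Continuous fun u : ℝ => (1 - u) * exp (-(x * u))).intervalIntegrable 0 1)
    (fun _ hu => mul_pos (by linarith [hu.2]) (exp_pos _)) zero_lt_one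

lemma expTaylorKernel_antitone : Antitone expTaylorKernel := by
  intro a b hab
  refine intervalIntegral.integral_mono_on zero_le_one
    ((by fun_prop : Continuous _).intervalIntegrable 0 1)
    ((by fun_prop : Continuous _).intervalIntegrable 0 1) fun u ⟨hu0, hu1⟩ => ?_
  gcongr

lemma Psi_eq_inv_two_mul_expTaylorKernel (x : ℝ) : Psi x = (2 * expTaylorKernel x)⁻¹ := by
  rcases eq_or_ne x 0 with rfl | hx
  · simp [Psi, expTaylorKernel_zero]
  · have hK := (expTaylorKernel_pos x).ne'
    rw [Psi, if_neg hx, show x + exp (-x) - 1 = exp (-x) - 1 + x by ring,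
      ← sq_mul_expTaylorKernel]
    field_simp

lemma Psi_mul_exp_neg_sub_one_add (x l : ℝ) :
    Psi x * (exp (-l) - 1 + l) = l ^ 2 / 2 * (expTaylorKernel l / expTaylorKernel x) := by
  have hK := (expTaylorKernel_pos x).ne'
  rw [Psi_eq_inv_two_mul_expTaylorKernel, ← sq_mul_expTaylorKernel]
  field_simp

theorem Psi_sandwich_general (r : ℝ) (l : ℝ) (hl : |l| ≤ r) :
    Psi (-r) * (Real.exp (-l) - 1 + l) ≤ l ^ 2 / 2 ∧
      l ^ 2 / 2 ≤ Psi r * (Real.exp (-l) - 1 + l) := by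
  obtain ⟨hrl, hlr⟩ := abs_le.mp hl
  rw [Psi_mul_exp_neg_sub_one_add, Psi_mul_exp_neg_sub_one_add]
  constructor
  · refine mul_le_of_le_one_right (by positivity) ?_
    exact (div_le_one (expTaylorKernel_pos _)).2 (expTaylorKernel_antitone hrl)
  · refine le_mul_of_one_le_right (by positivity) ?_
    exact (one_le_div (expTaylorKernel_pos _)).2 (expTaylorKernel_antitone hlr)

/-- for every `r ≥ 0` and every `ℓ` with `|ℓ| ≤ r`, one has
`Ψ(-r)(e^{-ℓ} - 1 + ℓ) ≤ ℓ²/2 ≤ Ψ(r)(e^{-ℓ} - 1 + ℓ)`. -/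
theorem Psi_sandwich (r : ℝ) (hr : 0 ≤ r) (l : ℝ) (hl : |l| ≤ r) :
    Psi (-r) * (Real.exp (-l) - 1 + l) ≤ l ^ 2 / 2 ∧
      l ^ 2 / 2 ≤ Psi r * (Real.exp (-l) - 1 + l) :=
  Psi_sandwich_general r l hl
end

section
/- Let X be a finite set, T a stochastic matrix on X, and let L and Γ be the associated generator and carré du champ operator. Let f : X → ℝ be positive and let r ≥ 0 satisfy |log f(x) - log f(y)| ≤ r whenever T(x,y) > 0. Then for every x ∈ X: Ψ(-r)·((Lf)(x)/f(x) - (L log f)(x)) ≤ (Γ(log f))(x) ≤ Ψ(r)·((Lf)(x)/f(x) - (L log f)(x)), where Ψ(r) = r²/(2(r + e^{-r} - 1)) for r ≠ 0 and Ψ(0) = 1. -/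
variable {X : Type*}

/-- `T` is a stochastic matrix: nonnegative entries and unit row sums. -/
def IsStochastic [Fintype X] (T : X → X → ℝ) : Prop :=
  (∀ x y, 0 ≤ T x y) ∧ ∀ x, ∑ y, T x y = 1

/-- The generator: `(L f)(x) = ∑_y T(x,y) (f(y) - f(x))`. -/
noncomputable def gen [Fintype X] (T : X → X → ℝ) (f : X → ℝ) : X → ℝ :=
  fun x => ∑ y, T x y * (f y - f x)

/-- The carré du champ operator: `(Γ f)(x) = (1/2) ∑_y T(x,y) (f(y) - f(x))²`. -/
noncomputable def carre [Fintype X] (T : X → X → ℝ) (f : X → ℝ) : X → ℝ :=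
  fun x => (1 / 2) * ∑ y, T x y * (f y - f x) ^ 2

/-!
Write `s = log f(y) - log f(x)`. Then `Lf/f - L log f = ∑_y T(x,y) (eˢ - 1 - s)` and
`Γ(log f) = ∑_y T(x,y) s²/2`, so it suffices to compare `eˢ - 1 - s = φ₂(s) s²` with `s²/2` on
each edge, where `φ₂(s) = (eˢ - 1 - s)/s²`. Now `Ψ(r) = 1/(2 φ₂(-r))`, and `φ₂` is nondecreasing
(away from `0` its derivative is `s((s - 2)eˢ + s + 2)/s⁴ ≥ 0`, and it crosses `1/2` at `0`), so
`φ₂(-r) ≤ φ₂(s) ≤ φ₂(r)` for `|s| ≤ r` gives both bounds.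
-/

open Real Finset

lemma exp_le_quadratic_of_nonpos {s : ℝ} (hs : s ≤ 0) : exp s ≤ 1 + s + s ^ 2 / 2 := by
  have hmono : Monotone fun t : ℝ => exp t - 1 - t - t ^ 2 / 2 := by
    refine monotone_of_hasDerivAt_nonneg (f' := fun t => exp t - 1 - t) (fun t => ?_)
      fun t => by simp only [Pi.zero_apply]; linarith [add_one_le_exp t]
    refine ((((hasDerivAt_exp t).sub_const 1).sub (hasDerivAt_id' t)).sub
      ((hasDerivAt_pow 2 t).div_const 2)).congr_deriv ?_
    norm_num
  have := hmono hs
  simp only [exp_zero] at this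
  linarith

lemma monotone_sub_two_mul_exp_add_add_two : Monotone fun s : ℝ => (s - 2) * exp s + s + 2 := by
  refine monotone_of_hasDerivAt_nonneg (f' := fun s => (s - 1) * exp s + 1) (fun s => ?_)
    fun s => ?_
  · refine ((((hasDerivAt_id' s).sub_const 2).mul (hasDerivAt_exp s)).add
      (hasDerivAt_id' s)).add_const 2 |>.congr_deriv ?_
    ring
  · simp only [Pi.zero_apply]
    -- `e⁻ˢ ≥ 1 - s`, multiplied by `eˢ`
    have h : exp (-s) * exp s = 1 := by rw [← exp_add]; simp
    nlinarith [add_one_le_exp (-s), exp_pos s]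

lemma mul_sub_two_mul_exp_add_add_two_nonneg (s : ℝ) :
    0 ≤ s * ((s - 2) * exp s + s + 2) := by
  have h := monotone_sub_two_mul_exp_add_add_two
  rcases le_total 0 s with hs | hs
  · exact mul_nonneg hs (by simpa using h hs)
  · exact mul_nonneg_of_nonpos_of_nonpos hs (by simpa using h hs)

/-- The divided difference `exp[0, 0, s] = (eˢ - 1 - s) / s²`, extended continuously by `1/2`
at `0`. -/
noncomputable def phiTwo (s : ℝ) : ℝ :=
  if s = 0 then 1 / 2 else (exp s - 1 - s) / s ^ 2

lemma phiTwo_mul_sq (s : ℝ) : phiTwo s * s ^ 2 = exp s - 1 - s := by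
  unfold phiTwo
  split_ifs with hs
  · simp [hs]
  · exact div_mul_cancel₀ _ (pow_ne_zero 2 hs)

lemma phiTwo_pos (s : ℝ) : 0 < phiTwo s := by
  unfold phiTwo
  split_ifs with hs
  · norm_num
  · exact div_pos (by linarith [add_one_lt_exp hs]) (by positivity)

lemma half_le_phiTwo {s : ℝ} (hs : 0 ≤ s) : 1 / 2 ≤ phiTwo s := by
  unfold phiTwo
  split_ifs with h0
  · rfl
  · rw [le_div_iff₀ (by positivity)]
    linarith [quadratic_le_exp_of_nonneg hs]

lemma phiTwo_le_half {s : ℝ} (hs : s ≤ 0) : phiTwo s ≤ 1 / 2 := by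
  unfold phiTwo
  split_ifs with h0
  · rfl
  · rw [div_le_iff₀ (by positivity)]
    linarith [exp_le_quadratic_of_nonpos hs]

lemma hasDerivAt_phiTwo {s : ℝ} (hs : s ≠ 0) :
    HasDerivAt phiTwo (s * ((s - 2) * exp s + s + 2) / s ^ 4) s := by
  have hquot := (((hasDerivAt_exp s).sub_const 1).sub (hasDerivAt_id' s)).div
    (hasDerivAt_pow 2 s) (pow_ne_zero 2 hs)
  have heq : phiTwo =ᶠ[nhds s] fun t => (exp t - 1 - t) / t ^ 2 := by
    filter_upwards [isOpen_ne.mem_nhds hs] with t ht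
    simp [phiTwo, ht]
  refine (hquot.congr_of_eventuallyEq heq).congr_deriv ?_
  field_simp
  norm_num
  ring

lemma monotoneOn_phiTwo {D : Set ℝ} (hD : Convex ℝ D) (h0 : (0 : ℝ) ∉ D) :
    MonotoneOn phiTwo D := by
  have hne {s : ℝ} (hs : s ∈ D) : s ≠ 0 := fun h => h0 (h ▸ hs)
  refine monotoneOn_of_hasDerivWithinAt_nonneg hD
    (fun s hs => (hasDerivAt_phiTwo (hne hs)).continuousAt.continuousWithinAt)
    (fun s hs => (hasDerivAt_phiTwo (hne (interior_subset hs))).hasDerivWithinAt)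
    fun s _ => div_nonneg (mul_sub_two_mul_exp_add_add_two_nonneg s) (by positivity)

lemma monotone_phiTwo : Monotone phiTwo := by
  intro u v huv
  rcases lt_or_ge 0 u with hu | hu
  · exact monotoneOn_phiTwo (convex_Ioi 0) (by simp) hu (hu.trans_le huv) huv
  rcases lt_or_ge v 0 with hv | hv
  · exact monotoneOn_phiTwo (convex_Iio 0) (by simp) (huv.trans_lt hv) hv huv
  · exact (phiTwo_le_half hu).trans (half_le_phiTwo hv)

lemma Psi_eq_inv_phiTwo (r : ℝ) : Psi r = (2 * phiTwo (-r))⁻¹ := by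
  rcases eq_or_ne r 0 with rfl | hr
  · norm_num [Psi, phiTwo]
  · simp only [Psi, phiTwo, hr, neg_eq_zero, if_false, even_two, Even.neg_pow]
    field_simp
    ring

lemma sq_div_two_le_Psi_mul {r s : ℝ} (hs : -r ≤ s) :
    s ^ 2 / 2 ≤ Psi r * (exp s - 1 - s) := by
  have hpos := phiTwo_pos (-r)
  rw [Psi_eq_inv_phiTwo, ← phiTwo_mul_sq, ← div_eq_inv_mul, le_div_iff₀ (by positivity)]
  nlinarith [monotone_phiTwo hs, sq_nonneg s]

lemma Psi_neg_mul_le_sq_div_two {r s : ℝ} (hs : s ≤ r) :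
    Psi (-r) * (exp s - 1 - s) ≤ s ^ 2 / 2 := by
  have hpos := phiTwo_pos r
  rw [Psi_eq_inv_phiTwo, neg_neg, ← phiTwo_mul_sq, ← div_eq_inv_mul, div_le_iff₀ (by positivity)]
  nlinarith [monotone_phiTwo hs, sq_nonneg s]

lemma sum_mul_le_sum_mul_of_pos {ι : Type*} [Fintype ι] {w a b : ι → ℝ} (hw : ∀ i, 0 ≤ w i)
    (h : ∀ i, 0 < w i → a i ≤ b i) : ∑ i, w i * a i ≤ ∑ i, w i * b i := by
  refine sum_le_sum fun i _ => ?_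
  rcases (hw i).eq_or_lt with h0 | hpos
  · simp [← h0]
  · exact mul_le_mul_of_nonneg_left (h i hpos) hpos.le

section Generator

variable [Fintype X] (T : X → X → ℝ)

lemma carre_eq_sum (g : X → ℝ) (x : X) :
    carre T g x = ∑ y, T x y * ((g y - g x) ^ 2 / 2) := by
  simp only [carre, mul_sum]
  exact sum_congr rfl fun y _ => by ring

lemma gen_div_sub_gen_log {f : X → ℝ} (hf : ∀ x, 0 < f x) (x : X) :
    gen T f x / f x - gen T (fun z => log (f z)) x =
      ∑ y, T x y * (exp (log (f y) - log (f x)) - 1 - (log (f y) - log (f x))) := by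
  simp only [gen, sum_div, ← sum_sub_distrib]
  refine sum_congr rfl fun y _ => ?_
  rw [exp_sub, exp_log (hf y), exp_log (hf x)]
  field_simp [(hf x).ne']

end Generator

theorem approximate_chain_rule_general [Fintype X] (T : X → X → ℝ) (hT : IsStochastic T)
    (f : X → ℝ) (hf : ∀ x, 0 < f x) (r : ℝ)
    (hLip : ∀ x y, 0 < T x y → |Real.log (f x) - Real.log (f y)| ≤ r) (x : X) :
    Psi (-r) * (gen T f x / f x - gen T (fun z => Real.log (f z)) x) ≤
        carre T (fun z => Real.log (f z)) x ∧
      carre T (fun z => Real.log (f z)) x ≤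
        Psi r * (gen T f x / f x - gen T (fun z => Real.log (f z)) x) := by
  have hs : ∀ y, 0 < T x y → -r ≤ log (f y) - log (f x) ∧ log (f y) - log (f x) ≤ r :=
    fun y hy => abs_le.mp (abs_sub_comm (log (f x)) _ ▸ hLip x y hy)
  rw [gen_div_sub_gen_log T hf, carre_eq_sum]
  simp only [mul_sum, mul_left_comm (Psi _)]
  exact ⟨sum_mul_le_sum_mul_of_pos (hT.1 x) fun y hy => Psi_neg_mul_le_sq_div_two (hs y hy).2,
    sum_mul_le_sum_mul_of_pos (hT.1 x) fun y hy => sq_div_two_le_Psi_mul (hs y hy).1⟩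

/-- Approximate chain rule: if `f > 0` and `log f` has oscillation at most `r`
along edges, then `Ψ(-r)(Lf/f - L log f) ≤ Γ(log f) ≤ Ψ(r)(Lf/f - L log f)` pointwise. -/
theorem approximate_chain_rule [Fintype X] (T : X → X → ℝ) (hT : IsStochastic T)
    (f : X → ℝ) (hf : ∀ x, 0 < f x) (r : ℝ) (hr : 0 ≤ r)
    (hLip : ∀ x y, 0 < T x y → |Real.log (f x) - Real.log (f y)| ≤ r) (x : X) :
    Psi (-r) * (gen T f x / f x - gen T (fun z => Real.log (f z)) x) ≤
        carre T (fun z => Real.log (f z)) x ∧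
      carre T (fun z => Real.log (f z)) x ≤
        Psi r * (gen T f x / f x - gen T (fun z => Real.log (f z)) x) :=
  approximate_chain_rule_general T hT f hf r hLip x
end

section
/- Let X be a finite set and π a fully supported probability measure on X, equipped with an adjacency relation ~. Suppose C > 0 is such that for every f : X → ℝ with ∑_x π(x)f(x) = 0 and |f(x) - f(y)| ≤ 1 whenever x ~ y, one has log(∑_x π(x)e^{t f(x)}) ≤ C·t²/4 for all t ≥ 0. Then for every f : X → ℝ with |f(x) - f(y)| ≤ 1 whenever x ~ y, max_x f(x) - min_x f(x) ≤ 2·√(C·log(1/π_min)), where π_min = min_x π(x). In particular, the diameter of the graph (X, ~) is at most 2·√(C·log(1/π_min)). -/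
variable {X : Type*}

/-- The graph associated with a symmetric adjacency relation `A` (this coincides with `A`
off the diagonal whenever `A` is symmetric). -/
noncomputable def relGraph (A : X → X → Prop) : SimpleGraph X where
  Adj x y := x ≠ y ∧ A x y ∧ A y x
  symm := by constructor; intro x y ⟨h1, h2, h3⟩; exact ⟨h1.symm, h3, h2⟩
  loopless := by constructor; intro x ⟨h1, _⟩; exact h1 rfl

/-!
Herbst's argument. If `f` is edge-Lipschitz and centered, the sub-Gaussian bound gives
`π(z) e^{t f(z)} ≤ ∑ π e^{t f} ≤ e^{C t²/4}`, i.e. `t f(z) ≤ C t²/4 + log(1/π(z))` for all `t ≥ 0`;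
optimizing at `t = 2 f(z)/C` yields `f(z) ≤ √(C log(1/π(z))) ≤ √(C log(1/π_min))`. Applied to
`f - 𝔼f` and `𝔼f - f`, every value of `f` lies within this distance of the mean, so the oscillation
of `f` is at most twice it. The graph distance from a fixed vertex is edge-Lipschitz, and its
oscillation is the diameter when the vertex is an endpoint of a diametral pair.
-/

open Real

lemma le_sqrt_mul_of_forall_mul_le {C L v : ℝ} (hC : 0 < C)
    (h : ∀ t : ℝ, 0 < t → t * v ≤ C * t ^ 2 / 4 + L) : v ≤ √(C * L) := by
  rcases le_or_gt v 0 with hv | hv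
  · exact hv.trans (sqrt_nonneg _)
  rw [le_sqrt' hv]
  have hopt := h (2 * v / C) (by positivity)
  have hsq : 2 * v / C * v = C * (2 * v / C) ^ 2 / 4 + v ^ 2 / C := by field_simp; ring
  have hvL : v ^ 2 / C ≤ L := by linarith
  rwa [div_le_iff₀ hC, mul_comm] at hvL

lemma le_sqrt_mul_log_inv_of_log_sum_mul_exp_le [Fintype X] {pi h : X → ℝ} {C : ℝ} (hC : 0 < C)
    (hpi : ∀ x, 0 ≤ pi x) {z : X} (hz : 0 < pi z)
    (hmgf : ∀ t : ℝ, 0 ≤ t → log (∑ x, pi x * exp (t * h x)) ≤ C * t ^ 2 / 4) :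
    h z ≤ √(C * log (1 / pi z)) := by
  refine le_sqrt_mul_of_forall_mul_le hC fun t ht ↦ ?_
  have hterm : pi z * exp (t * h z) ≤ ∑ x, pi x * exp (t * h x) :=
    Finset.single_le_sum (f := fun x ↦ pi x * exp (t * h x))
      (fun x _ ↦ mul_nonneg (hpi x) (exp_pos _).le) (Finset.mem_univ z)
  have hlog : log (pi z) + t * h z ≤ C * t ^ 2 / 4 := by
    rw [← log_exp (t * h z), ← log_mul hz.ne' (exp_pos _).ne']
    exact (log_le_log (by positivity) hterm).trans (hmgf t ht.le)
  rw [one_div, log_inv]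
  linarith

lemma abs_sub_sum_mul_le_sqrt_mul_log_inv [Fintype X] (A : X → X → Prop) {pi : X → ℝ}
    (hpos : ∀ x, 0 < pi x) (hsum : ∑ x, pi x = 1) {C : ℝ} (hC : 0 < C)
    (hmgf : ∀ f : X → ℝ, (∑ x, pi x * f x = 0) → (∀ x y, A x y → |f x - f y| ≤ 1) →
      ∀ t : ℝ, 0 ≤ t → log (∑ x, pi x * exp (t * f x)) ≤ C * t ^ 2 / 4)
    {f : X → ℝ} (hf : ∀ x y, A x y → |f x - f y| ≤ 1) (z : X) :
    |f z - ∑ x, pi x * f x| ≤ √(C * log (1 / pi z)) := by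
  set μ := ∑ x, pi x * f x
  have hdev : ∀ s : ℝ, |s| = 1 → s * (f z - μ) ≤ √(C * log (1 / pi z)) := by
    intro s hs
    have hcent : ∑ x, pi x * (s * (f x - μ)) = 0 := by
      simp only [mul_sub, mul_left_comm _ s, Finset.sum_sub_distrib, ← Finset.mul_sum,
        ← Finset.sum_mul, hsum]
      ring
    have hlip : ∀ x y, A x y → |s * (f x - μ) - s * (f y - μ)| ≤ 1 := fun x y hxy ↦ by
      rw [← mul_sub, sub_sub_sub_cancel_right, abs_mul, hs, one_mul]
      exact hf x y hxy
    exact le_sqrt_mul_log_inv_of_log_sum_mul_exp_le hC (fun x ↦ (hpos x).le) (hpos z)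
      (hmgf _ hcent hlip)
  rw [abs_le]
  constructor
  · linarith [hdev (-1) (by norm_num)]
  · linarith [hdev 1 (by norm_num)]

lemma log_one_div_le_log_one_div_iInf [Finite X] {pi : X → ℝ} (hpos : ∀ x, 0 < pi x) (z : X) :
    log (1 / pi z) ≤ log (1 / ⨅ x, pi x) := by
  have : Nonempty X := ⟨z⟩
  have hinf : 0 < ⨅ x, pi x := by
    obtain ⟨x₀, hx₀⟩ := exists_eq_ciInf_of_finite (f := pi)
    exact hx₀ ▸ hpos x₀
  exact log_le_log (one_div_pos.mpr (hpos z))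
    (one_div_le_one_div_of_le hinf (ciInf_le (Finite.bddBelow_range pi) z))

lemma ciSup_sub_ciInf_le_two_mul [Finite X] [Nonempty X] {f : X → ℝ} {c r : ℝ}
    (h : ∀ x, |f x - c| ≤ r) : (⨆ x, f x) - ⨅ x, f x ≤ 2 * r := by
  have hsup : (⨆ x, f x) ≤ c + r := ciSup_le fun x ↦ by linarith [(abs_le.mp (h x)).2]
  have hinf : c - r ≤ ⨅ x, f x := le_ciInf fun x ↦ by linarith [(abs_le.mp (h x)).1]
  linarith

namespace SimpleGraph

variable {V : Type*} {G : SimpleGraph V}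

lemma Adj.abs_dist_sub_dist_le_one {v w : V} (hadj : G.Adj v w) (u : V) :
    |(G.dist u v : ℝ) - G.dist u w| ≤ 1 := by
  have hnat : G.dist u w ≤ G.dist u v + 1 ∧ G.dist u v ≤ G.dist u w + 1 := by
    rcases hadj.diff_dist_adj (u := u) with h | h | h <;> omega
  have h₁ : (G.dist u w : ℝ) ≤ G.dist u v + 1 := by exact_mod_cast hnat.1
  have h₂ : (G.dist u v : ℝ) ≤ G.dist u w + 1 := by exact_mod_cast hnat.2
  exact abs_le.mpr ⟨by linarith, by linarith⟩

lemma diam_le_of_forall_ciSup_sub_ciInf_le [Finite V] [Nonempty V] {r : ℝ}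
    (h : ∀ f : V → ℝ, (∀ v w, G.Adj v w → |f v - f w| ≤ 1) → (⨆ x, f x) - ⨅ x, f x ≤ r) :
    (G.diam : ℝ) ≤ r := by
  obtain ⟨u, v, huv⟩ := G.exists_dist_eq_diam
  have hosc := h (fun x ↦ (G.dist u x : ℝ)) fun a b hab ↦ hab.abs_dist_sub_dist_le_one u
  have hv : (G.dist u v : ℝ) ≤ ⨆ x, (G.dist u x : ℝ) :=
    le_ciSup (f := fun x ↦ (G.dist u x : ℝ)) (Finite.bddAbove_range _) v
  have hu : (⨅ x, (G.dist u x : ℝ)) ≤ G.dist u u :=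
    ciInf_le (f := fun x ↦ (G.dist u x : ℝ)) (Finite.bddBelow_range _) u
  rw [← huv]
  simp only [dist_self, Nat.cast_zero] at hu
  linarith

end SimpleGraph

lemma relGraph_adj_of_ne {A : X → X → Prop} (hsymm : ∀ x y, A x y → A y x) {x y : X}
    (hxy : A x y) (hne : x ≠ y) : (relGraph A).Adj x y :=
  ⟨hne, hxy, hsymm x y hxy⟩

theorem herbst_diameter_bound_general [Fintype X] [Nonempty X]
    (A : X → X → Prop) (hsymmA : ∀ x y, A x y → A y x)
    (pi : X → ℝ) (hpos : ∀ x, 0 < pi x) (hsum : ∑ x, pi x = 1)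
    (C : ℝ) (hC : 0 < C)
    (hmgf : ∀ f : X → ℝ, (∑ x, pi x * f x = 0) → (∀ x y, A x y → |f x - f y| ≤ 1) →
      ∀ t : ℝ, 0 ≤ t →
        Real.log (∑ x, pi x * Real.exp (t * f x)) ≤ C * t ^ 2 / 4) :
    (∀ f : X → ℝ, (∀ x y, A x y → |f x - f y| ≤ 1) →
        (⨆ x, f x) - (⨅ x, f x) ≤ 2 * Real.sqrt (C * Real.log (1 / ⨅ x, pi x))) ∧
      ((relGraph A).diam : ℝ) ≤ 2 * Real.sqrt (C * Real.log (1 / ⨅ x, pi x)) := by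
  have hosc : ∀ f : X → ℝ, (∀ x y, A x y → |f x - f y| ≤ 1) →
      (⨆ x, f x) - (⨅ x, f x) ≤ 2 * √(C * log (1 / ⨅ x, pi x)) := fun f hf ↦
    ciSup_sub_ciInf_le_two_mul fun z ↦
      (abs_sub_sum_mul_le_sqrt_mul_log_inv A hpos hsum hC hmgf hf z).trans <|
        sqrt_le_sqrt <| mul_le_mul_of_nonneg_left (log_one_div_le_log_one_div_iInf hpos z) hC.le
  refine ⟨hosc, SimpleGraph.diam_le_of_forall_ciSup_sub_ciInf_le fun f hf ↦ hosc f ?_⟩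
  intro x y hxy
  rcases eq_or_ne x y with rfl | hne
  · simp
  · exact hf x y (relGraph_adj_of_ne hsymmA hxy hne)

/-- Herbst argument: sub-Gaussian MGF bounds for centered edge-Lipschitz
observables imply `max f - min f ≤ 2 √(C log(1/π_min))` for all edge-Lipschitz `f`;
in particular the diameter of the graph is at most `2 √(C log(1/π_min))`. -/
theorem herbst_diameter_bound [Fintype X] [Nonempty X]
    (A : X → X → Prop) (hsymmA : ∀ x y, A x y → A y x)
    (hconn : (relGraph A).Connected)
    (pi : X → ℝ) (hpos : ∀ x, 0 < pi x) (hsum : ∑ x, pi x = 1)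
    (C : ℝ) (hC : 0 < C)
    (hmgf : ∀ f : X → ℝ, (∑ x, pi x * f x = 0) → (∀ x y, A x y → |f x - f y| ≤ 1) →
      ∀ t : ℝ, 0 ≤ t →
        Real.log (∑ x, pi x * Real.exp (t * f x)) ≤ C * t ^ 2 / 4) :
    (∀ f : X → ℝ, (∀ x y, A x y → |f x - f y| ≤ 1) →
        (⨆ x, f x) - (⨅ x, f x) ≤ 2 * Real.sqrt (C * Real.log (1 / ⨅ x, pi x))) ∧
      ((relGraph A).diam : ℝ) ≤ 2 * Real.sqrt (C * Real.log (1 / ⨅ x, pi x)) :=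
  herbst_diameter_bound_general A hsymmA pi hpos hsum C hC hmgf
end

section
/- Let X and Y be finite sets, T a stochastic matrix on X, Φ : X → Y a surjective map, and T̂ a stochastic matrix on Y such that for all x ∈ X and y ∈ Y, ∑_{z : Φ(z)=y} T(x,z) = T̂(Φ(x), y). Let L, L̂ be the associated generators. Then for every t ≥ 0 and every f : Y → ℝ: exp(tL)(f∘Φ) = (exp(tL̂)f)∘Φ. -/
variable {X : Type*}

/-- The generator as a matrix: `L = T - Id`. -/
noncomputable def genMat [Fintype X] [DecidableEq X] (T : X → X → ℝ) : Matrix X X ℝ :=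
  fun x y => T x y - if x = y then 1 else 0

/-- The heat semigroup `P_t = exp (t L)` (matrix exponential). -/
noncomputable def heatSG [Fintype X] [DecidableEq X] (T : X → X → ℝ) (t : ℝ) : Matrix X X ℝ :=
  NormedSpace.exp (t • genMat T)

/-- Evolution of a measure (row vector) `μ_t = μ · exp (t L)`. -/
noncomputable def evolve [Fintype X] [DecidableEq X] (T : X → X → ℝ) (μ : X → ℝ) (t : ℝ) :
    X → ℝ :=
  Matrix.vecMul μ (heatSG T t)

/-!
Let `Π` be the `X × Y` matrix of `Φ` (`Π x y = 1` iff `Φ x = y`), so that `Π f = f ∘ Φ`. The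
lumping condition says exactly `T Π = Π T̂`, hence `L Π = Π L̂`. Such an intertwining relation
passes to powers and then, term by term, to exponential series: `exp (t L) Π = Π exp (t L̂)`.
Applying both sides to `f` gives the claim.
-/

open NormedSpace
open scoped Nat Matrix

namespace Matrix

variable {m n : Type*} [Fintype m] [DecidableEq m] [Fintype n] [DecidableEq n]

theorem pow_mul_eq_mul_pow_of_mul_eq {α : Type*} [Semiring α]
    {A : Matrix m m α} {B : Matrix n n α} {P : Matrix m n α}
    (h : A * P = P * B) (k : ℕ) : A ^ k * P = P * B ^ k := by
  induction k with
  | zero => simp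
  | succ k ih =>
    rw [pow_succ', Matrix.mul_assoc, ih, ← Matrix.mul_assoc, h, Matrix.mul_assoc, ← pow_succ']

open scoped Norms.Operator in
theorem exp_mul_eq_mul_exp_of_mul_eq {𝕂 : Type*} [RCLike 𝕂]
    {A : Matrix m m 𝕂} {B : Matrix n n 𝕂} {P : Matrix m n 𝕂}
    (h : A * P = P * B) : exp A * P = P * exp B := by
  have hA : HasSum (fun k => ((k !⁻¹ : 𝕂) • A ^ k) * P) (exp A * P) :=
    (exp_series_hasSum_exp' A).map (mulRightLinearMap m 𝕂 P)
      (continuous_id.matrix_mul continuous_const)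
  have hB : HasSum (fun k => P * ((k !⁻¹ : 𝕂) • B ^ k)) (P * exp B) :=
    (exp_series_hasSum_exp' B).map (mulLeftLinearMap n 𝕂 P)
      (continuous_const.matrix_mul continuous_id)
  simp only [Matrix.smul_mul, Matrix.mul_smul, pow_mul_eq_mul_pow_of_mul_eq h] at hA hB
  exact hA.unique hB

end Matrix

section Lumping

variable {Y : Type*} (R : Type*) [DecidableEq Y] [Semiring R]

def lumpingMatrix (Φ : X → Y) : Matrix X Y R :=
  Matrix.of fun x y => if Φ x = y then 1 else 0

variable {R}

theorem lumpingMatrix_mulVec [Fintype Y] (Φ : X → Y) (f : Y → R) :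
    lumpingMatrix R Φ *ᵥ f = f ∘ Φ := by
  ext x
  simp [lumpingMatrix, Matrix.mulVec, dotProduct, ite_mul]

theorem lumpingMatrix_mul [Fintype Y] (Φ : X → Y) (M : Matrix Y Y R) :
    lumpingMatrix R Φ * M = M.submatrix Φ id := by
  ext x y
  simp [lumpingMatrix, Matrix.mul_apply, ite_mul]

theorem mul_lumpingMatrix_apply [Fintype X] (Φ : X → Y) (M : Matrix X X R) (x : X) (y : Y) :
    (M * lumpingMatrix R Φ) x y = ∑ z ∈ Finset.univ.filter fun z => Φ z = y, M x z := by
  simp [lumpingMatrix, Matrix.mul_apply, Finset.sum_filter]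

end Lumping

section Generator

variable {Y : Type*} [Fintype X] [DecidableEq X] [Fintype Y] [DecidableEq Y]

theorem genMat_eq_sub_one (T : X → X → ℝ) : genMat T = Matrix.of T - 1 := by
  ext x y
  simp [genMat, Matrix.one_apply]

theorem genMat_mul_lumpingMatrix {T : X → X → ℝ} {Φ : X → Y} {T' : Y → Y → ℝ}
    (hproj : ∀ x y, ∑ z ∈ Finset.univ.filter fun z => Φ z = y, T x z = T' (Φ x) y) :
    genMat T * lumpingMatrix ℝ Φ = lumpingMatrix ℝ Φ * genMat T' := by
  have hT : Matrix.of T * lumpingMatrix ℝ Φ = lumpingMatrix ℝ Φ * Matrix.of T' := by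
    ext x y
    rw [mul_lumpingMatrix_apply, lumpingMatrix_mul]
    exact hproj x y
  rw [genMat_eq_sub_one, genMat_eq_sub_one, Matrix.sub_mul, Matrix.mul_sub, hT, Matrix.one_mul,
    Matrix.mul_one]

theorem heatSG_mul_lumpingMatrix {T : X → X → ℝ} {Φ : X → Y} {T' : Y → Y → ℝ}
    (hproj : ∀ x y, ∑ z ∈ Finset.univ.filter fun z => Φ z = y, T x z = T' (Φ x) y) (t : ℝ) :
    heatSG T t * lumpingMatrix ℝ Φ = lumpingMatrix ℝ Φ * heatSG T' t :=
  Matrix.exp_mul_eq_mul_exp_of_mul_eq <| by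
    rw [Matrix.smul_mul, genMat_mul_lumpingMatrix hproj, Matrix.mul_smul]

end Generator

theorem markovian_projection_semigroup_general {Y : Type*} [Fintype X] [DecidableEq X]
    [Fintype Y] [DecidableEq Y]
    (T : X → X → ℝ)
    (Φ : X → Y)
    (T' : Y → Y → ℝ)
    (hproj : ∀ (x : X) (y : Y),
      ∑ z ∈ Finset.univ.filter fun z => Φ z = y, T x z = T' (Φ x) y) :
    ∀ t : ℝ, 0 ≤ t → ∀ f : Y → ℝ,
      (heatSG T t).mulVec (f ∘ Φ) = ((heatSG T' t).mulVec f) ∘ Φ := by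
  intro t _ f
  rw [← lumpingMatrix_mulVec Φ f, Matrix.mulVec_mulVec, heatSG_mul_lumpingMatrix hproj,
    ← Matrix.mulVec_mulVec, lumpingMatrix_mulVec]

/-- Markovian projection: semigroup intertwining:
`exp(tL)(f∘Φ) = (exp(tL̂)f)∘Φ` for all `t ≥ 0`. -/
theorem markovian_projection_semigroup {Y : Type*} [Fintype X] [DecidableEq X]
    [Fintype Y] [DecidableEq Y]
    (T : X → X → ℝ) (hT : IsStochastic T)
    (Φ : X → Y) (hsurj : Function.Surjective Φ)
    (T' : Y → Y → ℝ) (hT' : IsStochastic T')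
    (hproj : ∀ (x : X) (y : Y),
      ∑ z ∈ Finset.univ.filter fun z => Φ z = y, T x z = T' (Φ x) y) :
    ∀ t : ℝ, 0 ≤ t → ∀ f : Y → ℝ,
      (heatSG T t).mulVec (f ∘ Φ) = ((heatSG T' t).mulVec f) ∘ Φ :=
  markovian_projection_semigroup_general T Φ T' hproj
end

section
/- Let a > 0, C > 0, ε > 0, t₀ ≥ 0, and let h : ℝ → ℝ be continuous on [t₀, t] and differentiable on (t₀, t] with, for every s ∈ (t₀, t], h'(s) ≤ -(ε·h(s) - 1)²/(30(s·a + C)). Assume h is nonnegative. Then h(t) ≤ 1/ε + 30(t·a + C)/(ε²(t - t₀)) for every t > t₀. -/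
/-!
If `h(t) > 1/ε` (otherwise there is nothing to prove), the hypothesis makes `h` nonincreasing,
so `u = ε h - 1` stays positive on `[t₀, t]` and obeys the Riccati-type inequality `u' ≤ -(ε / D) u²` with `D = 30 (t a + C)`.
Then `1 / u` grows at least at rate `ε / D`, and since `1 / u(t₀) > 0` this forces
`u(t) < D / (ε (t - t₀))`.
-/

open Set

theorem lt_one_div_of_deriv_le_neg_mul_sq {u : ℝ → ℝ} {a b c : ℝ} (hab : a < b) (hc : 0 < c)
    (hcont : ContinuousOn u (Icc a b)) (hpos : ∀ s ∈ Icc a b, 0 < u s)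
    (hderiv : ∀ s ∈ Ioo a b, DifferentiableAt ℝ u s ∧ deriv u s ≤ -c * u s ^ 2) :
    u b < 1 / (c * (b - a)) := by
  have hinv : ∀ s ∈ Ioo a b, HasDerivAt (fun x => (u x)⁻¹) (-deriv u s / u s ^ 2) s :=
    fun s hs => (hderiv s hs).1.hasDerivAt.inv (hpos s (Ioo_subset_Icc_self hs)).ne'
  have hgrowth : c * (b - a) ≤ (u b)⁻¹ - (u a)⁻¹ := by
    refine (convex_Icc a b).mul_sub_le_image_sub_of_le_deriv (f := fun x => (u x)⁻¹)
      (hcont.inv₀ fun s hs => (hpos s hs).ne') ?_ ?_ a (left_mem_Icc.2 hab.le) b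
      (right_mem_Icc.2 hab.le) hab.le
    · rw [interior_Icc]
      exact fun s hs => (hinv s hs).differentiableAt.differentiableWithinAt
    · rw [interior_Icc]
      intro s hs
      rw [(hinv s hs).deriv, le_div_iff₀ (pow_pos (hpos s (Ioo_subset_Icc_self hs)) 2)]
      linarith [(hderiv s hs).2]
  have hua : 0 < (u a)⁻¹ := inv_pos.2 (hpos a (left_mem_Icc.2 hab.le))
  rw [lt_one_div (hpos b (right_mem_Icc.2 hab.le)) (by nlinarith), one_div]
  linarith

theorem deriv_mul_sub_one_le_of_deriv_le_neg_sq_div {h : ℝ → ℝ} {ε w D s : ℝ} (hε : 0 ≤ ε)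
    (hw : 0 < w) (hwD : w ≤ D) (hdiff : DifferentiableAt ℝ h s)
    (hbound : deriv h s ≤ -(ε * h s - 1) ^ 2 / w) :
    DifferentiableAt ℝ (fun x => ε * h x - 1) s ∧
      deriv (fun x => ε * h x - 1) s ≤ -(ε / D) * (ε * h s - 1) ^ 2 := by
  have hu := (hdiff.hasDerivAt.const_mul ε).sub_const 1
  refine ⟨hu.differentiableAt, ?_⟩
  have hweaker : (ε * h s - 1) ^ 2 / D ≤ (ε * h s - 1) ^ 2 / w :=
    div_le_div_of_nonneg_left (sq_nonneg _) hw hwD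
  rw [neg_div] at hbound
  rw [hu.deriv]
  calc ε * deriv h s ≤ ε * -((ε * h s - 1) ^ 2 / D) := by gcongr; linarith
    _ = -(ε / D) * (ε * h s - 1) ^ 2 := by ring

theorem integrate_differential_inequality_general
    (a C ε t₀ : ℝ) (ha : 0 < a) (hC : 0 < C) (hε : 0 < ε) (ht₀ : 0 ≤ t₀)
    (h : ℝ → ℝ) :
    ∀ t : ℝ, t₀ < t →
      ContinuousOn h (Set.Icc t₀ t) →
      (∀ s ∈ Set.Ioc t₀ t, DifferentiableAt ℝ h s ∧
        deriv h s ≤ -(ε * h s - 1) ^ 2 / (30 * (s * a + C))) →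
      h t ≤ 1 / ε + 30 * (t * a + C) / (ε ^ 2 * (t - t₀)) := by
  intro t ht hcont hderiv
  set D := 30 * (t * a + C)
  have hD : 0 < D := by have := ht₀.trans_lt ht; positivity
  by_cases hsmall : h t ≤ 1 / ε
  · exact hsmall.trans (le_add_of_nonneg_right (by positivity))
  have hden : ∀ s ∈ Ioo t₀ t, 0 < 30 * (s * a + C) ∧ 30 * (s * a + C) ≤ D := fun s hs =>
    ⟨by have := ht₀.trans_lt hs.1; positivity, by nlinarith [hs.2]⟩
  have hanti : AntitoneOn h (Icc t₀ t) := by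
    refine antitoneOn_of_deriv_nonpos (convex_Icc t₀ t) hcont ?_ ?_ <;> rw [interior_Icc]
    · exact fun s hs => (hderiv s (Ioo_subset_Ioc_self hs)).1.differentiableWithinAt
    · exact fun s hs => (hderiv s (Ioo_subset_Ioc_self hs)).2.trans
        (div_nonpos_of_nonpos_of_nonneg (neg_nonpos.2 (sq_nonneg _)) (hden s hs).1.le)
  have hpos : ∀ s ∈ Icc t₀ t, 0 < ε * h s - 1 := fun s hs => by
    have := hanti hs (right_mem_Icc.2 ht.le) hs.2
    rw [not_le, div_lt_iff₀' hε] at hsmall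
    nlinarith
  have hbound := lt_one_div_of_deriv_le_neg_mul_sq (u := fun x => ε * h x - 1) ht (div_pos hε hD)
    ((continuousOn_const.mul hcont).sub continuousOn_const) hpos fun s hs =>
      deriv_mul_sub_one_le_of_deriv_le_neg_sq_div hε.le (hden s hs).1 (hden s hs).2
        (hderiv s (Ioo_subset_Ioc_self hs)).1 (hderiv s (Ioo_subset_Ioc_self hs)).2
  have hrhs : 1 / ε + D / (ε ^ 2 * (t - t₀)) = (1 + 1 / (ε / D * (t - t₀))) / ε := by
    field_simp
  rw [hrhs, le_div_iff₀ hε]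
  linarith

/-- Integration of the differential inequality: if `h ≥ 0` is continuous on
`[t₀, t]`, differentiable on `(t₀, t]` with `h'(s) ≤ -(ε h(s) - 1)² / (30 (s a + C))`, then
`h(t) ≤ 1/ε + 30 (t a + C) / (ε² (t - t₀))` for every `t > t₀`. -/
theorem integrate_differential_inequality
    (a C ε t₀ : ℝ) (ha : 0 < a) (hC : 0 < C) (hε : 0 < ε) (ht₀ : 0 ≤ t₀)
    (h : ℝ → ℝ) (hnn : ∀ s, 0 ≤ h s) :
    ∀ t : ℝ, t₀ < t →
      ContinuousOn h (Set.Icc t₀ t) →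
      (∀ s ∈ Set.Ioc t₀ t, DifferentiableAt ℝ h s ∧
        deriv h s ≤ -(ε * h s - 1) ^ 2 / (30 * (s * a + C))) →
      h t ≤ 1 / ε + 30 * (t * a + C) / (ε ^ 2 * (t - t₀)) :=
  integrate_differential_inequality_general a C ε t₀ ha hC hε ht₀ h
end
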